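/- Let μ be the bracket on ℝ⁴ given by μ(e₁,e₂) = e₄. (i) A symmetric 4×4 real matrix D is a derivation of μ if and only if D = [[a,α,0,0],[α,b,0,0],[0,0,c,0],[0,0,0,a+b]] for some real a,b,c,α. (ii) An orthogonal 4×4 real matrix g is an automorphism of μ if and only if g = diag(H, ε, det H) in block form, where H is an orthogonal 2×2 matrix acting on span(e₁,e₂), ε ∈ {1,−1} is the (3,3) entry, and the (4,4) entry is det H, all other entries being zero. -/
import Mathlib


open Matrix

/-- The bracket on ℝ⁴ given by μ(e₁,e₂) = e₄ (bilinear extension);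
this is η₂ = (0,0,0,12), the direct sum of the Heisenberg algebra and ℝ. -/
def eta2 (x y : Fin 4 → ℝ) : Fin 4 → ℝ := ![0, 0, 0, x 0 * y 1 - x 1 * y 0]

/-- `D` is a derivation of the bracket `eta2`. -/
def IsDerivEta2 (D : Matrix (Fin 4) (Fin 4) ℝ) : Prop :=
  ∀ x y : Fin 4 → ℝ, D.mulVec (eta2 x y) = eta2 (D.mulVec x) y + eta2 x (D.mulVec y)

/-- `g` is an automorphism of the bracket `eta2`. -/
def IsAutoEta2 (g : Matrix (Fin 4) (Fin 4) ℝ) : Prop :=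
  IsUnit g ∧ ∀ x y : Fin 4 → ℝ, g.mulVec (eta2 x y) = eta2 (g.mulVec x) (g.mulVec y)

theorem stmt5 :
    (∀ D : Matrix (Fin 4) (Fin 4) ℝ, D.IsSymm →
      (IsDerivEta2 D ↔ ∃ a b c α : ℝ,
        D = !![a, α, 0, 0; α, b, 0, 0; 0, 0, c, 0; 0, 0, 0, a + b])) ∧
    (∀ g : Matrix (Fin 4) (Fin 4) ℝ, g * gᵀ = 1 →
      (IsAutoEta2 g ↔ ∃ (H : Matrix (Fin 2) (Fin 2) ℝ) (ε : ℝ),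
        H * Hᵀ = 1 ∧ (ε = 1 ∨ ε = -1) ∧
        g = !![H 0 0, H 0 1, 0, 0;
               H 1 0, H 1 1, 0, 0;
               0, 0, ε, 0;
               0, 0, 0, H.det])) := by
  constructor
  · intro D hs
    constructor
    · intro h
      refine ⟨D 0 0, D 1 1, D 2 2, D 0 1, ?_⟩
      have z03 := congrFun (h ![1,0,0,0] ![0,1,0,0]) 0
      have z13 := congrFun (h ![1,0,0,0] ![0,1,0,0]) 1
      have z23 := congrFun (h ![1,0,0,0] ![0,1,0,0]) 2
      have h33 := congrFun (h ![1,0,0,0] ![0,1,0,0]) 3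
      have z12 := congrFun (h ![1,0,0,0] ![0,0,1,0]) 3
      have z02 := congrFun (h ![0,0,1,0] ![0,1,0,0]) 3
      simp [eta2, mulVec, dotProduct, Fin.sum_univ_four] at z03 z13 z23 h33 z12 z02
      have hsym : ∀ i j, D j i = D i j := fun i j => congrFun (congrFun hs.symm j) i
      ext i j
      fin_cases i <;> fin_cases j <;>
        simp [Matrix.vecHead, Matrix.vecTail] <;>
        linarith [hsym 0 1, hsym 0 2, hsym 0 3, hsym 1 2, hsym 1 3, hsym 2 3]
    · rintro ⟨a, b, c, α, rfl⟩
      intro x y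
      funext i
      fin_cases i <;>
        simp [eta2, mulVec, dotProduct, Fin.sum_univ_four] <;> ring
  · intro g hg
    constructor
    · rintro ⟨-, hA⟩
      have z03 := congrFun (hA ![1,0,0,0] ![0,1,0,0]) 0
      have z13 := congrFun (hA ![1,0,0,0] ![0,1,0,0]) 1
      have z23 := congrFun (hA ![1,0,0,0] ![0,1,0,0]) 2
      have hd := congrFun (hA ![1,0,0,0] ![0,1,0,0]) 3
      have m02 := congrFun (hA ![1,0,0,0] ![0,0,1,0]) 3
      have m12 := congrFun (hA ![0,1,0,0] ![0,0,1,0]) 3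
      simp [eta2, mulVec, dotProduct, Fin.sum_univ_four] at z03 z13 z23 hd m02 m12
      have hg' : gᵀ * g = 1 := mul_eq_one_comm.mp hg
      have c33 := congrFun (congrFun hg' 3) 3
      have c03 := congrFun (congrFun hg' 0) 3
      have c13 := congrFun (congrFun hg' 1) 3
      have c23 := congrFun (congrFun hg' 2) 3
      simp [Matrix.mul_apply, Fin.sum_univ_four, Matrix.one_apply, z03, z13, z23] at c33 c03 c13 c23
      have hne : g 3 3 ≠ 0 := by intro h0; rw [h0] at c33; norm_num at c33
      have z30 := c03.resolve_right hne
      have z31 := c13.resolve_right hne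
      have z32 := c23.resolve_right hne
      have z02 : g 0 2 = 0 := by
        linear_combination (-(g 3 3 * g 0 1)) * m02 + g 3 3 * g 0 0 * m12 + g 0 2 * g 3 3 * hd - g 0 2 * c33
      have z12 : g 1 2 = 0 := by
        linear_combination (-(g 3 3 * g 1 1)) * m02 + g 3 3 * g 1 0 * m12 + g 1 2 * g 3 3 * hd - g 1 2 * c33
      have c22 := congrFun (congrFun hg' 2) 2
      have c02 := congrFun (congrFun hg' 0) 2
      have c12 := congrFun (congrFun hg' 1) 2
      simp [Matrix.mul_apply, Fin.sum_univ_four, Matrix.one_apply, z02, z12, z32, z30, z31] at c22 c02 c12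
      have hne2 : g 2 2 ≠ 0 := by intro h0; rw [h0] at c22; norm_num at c22
      have z20 := c02.resolve_right hne2
      have z21 := c12.resolve_right hne2
      have r00 := congrFun (congrFun hg 0) 0
      have r01 := congrFun (congrFun hg 0) 1
      have r11 := congrFun (congrFun hg 1) 1
      simp [Matrix.mul_apply, Fin.sum_univ_four, Matrix.one_apply, z02, z12, z03, z13] at r00 r01 r11
      refine ⟨!![g 0 0, g 0 1; g 1 0, g 1 1], g 2 2, ?_, mul_self_eq_one_iff.mp c22, ?_⟩
      · ext i j
        fin_cases i <;> fin_cases j <;>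
          simp [Matrix.mul_apply, Fin.sum_univ_two, Matrix.one_apply, Matrix.vecHead, Matrix.vecTail] <;>
          linarith [r00, r01, r11]
      · ext i j
        fin_cases i <;> fin_cases j <;>
          simp [Matrix.det_fin_two_of, Matrix.vecHead, Matrix.vecTail] <;>
          linarith [z03, z13, z23, z30, z31, z32, z02, z12, z20, z21, hd]
    · rintro ⟨H, ε, hH, hε, rfl⟩
      refine ⟨⟨⟨_, _ᵀ, hg, mul_eq_one_comm.mp hg⟩, rfl⟩, ?_⟩
      intro x y
      funext i
      fin_cases i <;>
        simp [eta2, mulVec, dotProduct, Fin.sum_univ_four, Matrix.det_fin_two] <;> ring
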